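/- Let 𝒫 = (P, λ) be a temporal oriented line. Then the minimum cardinality of a temporally disjoint path cover of 𝒫, the minimum cardinality of a temporal path cover of 𝒫, and the maximum size of a temporal antichain of 𝒫 are all equal (temporal oriented lines satisfy the Dilworth and TD-Dilworth properties). -/

import Mathlib

/-! A temporal digraph on vertex set `V` is encoded by its arc-labeling
`lab : V → V → Finset ℕ`: there is an arc `u → v` iff `lab u v` is nonempty,
and `lab u v` is the (finite) set of time-steps at which the arc `u → v` is active. -/

/-- A temporal (directed) path: vertices `verts 0, …, verts len`, pairwise distinct,
traversed at strictly increasing times `times 0 < … < times (len-1)`, each arc being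
active at the time it is traversed. A single vertex (`len = 0`) is a temporal path. -/
structure TPath {V : Type*} (lab : V → V → Finset ℕ) where
  len : ℕ
  verts : Fin (len + 1) → V
  times : Fin len → ℕ
  inj : Function.Injective verts
  mono : StrictMono times
  mem_lab : ∀ i : Fin len, times i ∈ lab (verts i.castSucc) (verts i.succ)

/-- The set of vertices lying on a temporal path. -/
def TPath.vertexSet {V : Type*} {lab : V → V → Finset ℕ} (P : TPath lab) : Set V :=
  Set.range P.verts

/-- `P` is a temporal path from `u` to `v`. -/
def TPath.FromTo {V : Type*} {lab : V → V → Finset ℕ} (P : TPath lab) (u v : V) : Prop :=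
  P.verts 0 = u ∧ P.verts (Fin.last P.len) = v

/-- Two vertices are temporally connected if some temporal path contains both of them. -/
def TempConnected {V : Type*} (lab : V → V → Finset ℕ) (u v : V) : Prop :=
  ∃ P : TPath lab, u ∈ P.vertexSet ∧ v ∈ P.vertexSet

/-- A temporal antichain: a set of pairwise not temporally connected vertices. -/
def IsTempAntichain {V : Type*} (lab : V → V → Finset ℕ) (S : Set V) : Prop :=
  S.Pairwise fun u v => ¬ TempConnected lab u v

/-- A family of temporal paths is a temporal path cover if every vertex lies on some path. -/
def IsTPC {V : Type*} (lab : V → V → Finset ℕ) {m : ℕ} (C : Fin m → TPath lab) : Prop :=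
  ∀ v : V, ∃ i, v ∈ (C i).vertexSet

/-- Two temporal paths are temporally disjoint if any two of their arcs sharing an
end-vertex are traversed at distinct time-steps. -/
def TDisjoint {V : Type*} {lab : V → V → Finset ℕ} (P Q : TPath lab) : Prop :=
  ∀ i : Fin P.len, ∀ j : Fin Q.len,
    (P.verts i.castSucc = Q.verts j.castSucc ∨ P.verts i.castSucc = Q.verts j.succ ∨
     P.verts i.succ = Q.verts j.castSucc ∨ P.verts i.succ = Q.verts j.succ) →
    P.times i ≠ Q.times j

/-- The set of possible cardinalities of temporal path covers. -/
def tpcSizes {V : Type*} (lab : V → V → Finset ℕ) : Set ℕ :=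
  {m | ∃ C : Fin m → TPath lab, IsTPC lab C}

/-- The set of possible cardinalities of temporally disjoint path covers. -/
def tdpcSizes {V : Type*} (lab : V → V → Finset ℕ) : Set ℕ :=
  {m | ∃ C : Fin m → TPath lab, IsTPC lab C ∧ ∀ i j, i ≠ j → TDisjoint (C i) (C j)}

/-- The set of possible cardinalities of temporal antichains. -/
def antichainSizes {V : Type*} (lab : V → V → Finset ℕ) : Set ℕ :=
  {m | ∃ S : Finset V, S.card = m ∧ IsTempAntichain lab ↑S}

/-- The underlying undirected graph (forget orientations and labels). -/
def underlyingGraph {V : Type*} (lab : V → V → Finset ℕ) : SimpleGraph V where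
  Adj u v := u ≠ v ∧ ((lab u v).Nonempty ∨ (lab v u).Nonempty)
  symm := by constructor; intro u v h; exact ⟨h.1.symm, h.2.symm⟩
  loopless := by constructor; intro v h; exact h.1 rfl

/-- All time labels are positive integers. -/
def PositiveLabels {V : Type*} (lab : V → V → Finset ℕ) : Prop :=
  ∀ u v : V, ∀ t ∈ lab u v, 0 < t

/-- A temporal oriented tree: the underlying undirected graph is a tree and the digraph is
an orientation of it (no pair of opposite arcs, no loops). -/
def IsTemporalOrientedTree {V : Type*} (lab : V → V → Finset ℕ) : Prop :=
  (underlyingGraph lab).IsTree ∧ ∀ u v : V, (lab u v).Nonempty → lab v u = ∅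

/-- The connectivity graph: two distinct vertices are adjacent iff temporally connected. -/
def connGraph {V : Type*} (lab : V → V → Finset ℕ) : SimpleGraph V where
  Adj u v := u ≠ v ∧ TempConnected lab u v
  symm := by constructor; intro u v h; exact ⟨h.1.symm, h.2.imp fun P hP => ⟨hP.2, hP.1⟩⟩
  loopless := by constructor; intro v h; exact h.1 rfl

/-- `c` lists the vertices of an induced cycle of length `n` of `G`, in cyclic order:
the listed vertices are distinct and two of them are adjacent iff they are cyclically
consecutive. -/
def IsInducedCycle {V : Type*} (G : SimpleGraph V) (n : ℕ) (c : Fin n → V) : Prop :=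
  Function.Injective c ∧
    ∀ i j : Fin n, G.Adj (c i) (c j) ↔ ((i.val + 1) % n = j.val ∨ (j.val + 1) % n = i.val)

/-- A hole: an induced cycle of length at least 5. -/
def HasHole {V : Type*} (G : SimpleGraph V) : Prop :=
  ∃ n, 5 ≤ n ∧ ∃ c : Fin n → V, IsInducedCycle G n c

/-- An anti-hole: an induced subgraph whose complement is a cycle of length at least 5. -/
def HasAntihole {V : Type*} (G : SimpleGraph V) : Prop :=
  ∃ n, 5 ≤ n ∧ ∃ c : Fin n → V, IsInducedCycle Gᶜ n c

/-- A graph is weakly chordal if it has no hole and no anti-hole. -/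
def WeaklyChordal {V : Type*} (G : SimpleGraph V) : Prop :=
  ¬ HasHole G ∧ ¬ HasAntihole G

/-!
Number the vertices of the line `0, …, n - 1` along the path. The vertices of a temporal path
are distinct and consecutive ones are adjacent, so a temporal path runs monotonically along the
line: its vertices occupy an interval of positions, and each subinterval is occupied by a
subpath. Cover the line greedily from the left, each time by a temporal path occupying the
longest possible interval that starts at the first uncovered position. These paths are
vertex-disjoint, hence temporally disjoint, and their first vertices form a temporal antichain,
since a temporal path through two of them would occupy an interval longer than the greedy
choice. As an antichain meets every path of a cover at most once, both minima equal the maximum.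
-/

open Function

theorem exists_eq_add_mul_of_injOn_of_abs_sub_eq_one {p : ℕ → ℤ} {L : ℕ}
    (hinj : Set.InjOn p (Set.Iic L)) (hstep : ∀ i < L, |p (i + 1) - p i| = 1) :
    ∃ d : ℤ, (d = 1 ∨ d = -1) ∧ ∀ i ≤ L, p i = p 0 + d * i := by
  have hstep' : ∀ i < L, p (i + 1) - p i = 1 ∨ p (i + 1) - p i = -1 :=
    fun i hi => (abs_eq zero_le_one).mp (hstep i hi)
  rcases Nat.eq_zero_or_pos L with rfl | hL
  · exact ⟨1, Or.inl rfl, fun i hi => by simp [Nat.le_zero.mp hi]⟩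
  have hconst : ∀ i < L, p (i + 1) - p i = p 1 - p 0 := by
    intro i hi
    induction i with
    | zero => rfl
    | succ i ih =>
      have hback : p (i + 1 + 1) ≠ p i := fun h =>
        absurd (hinj (Set.mem_Iic.mpr (by omega)) (Set.mem_Iic.mpr (by omega)) h) (by omega)
      have := ih (by omega)
      rcases hstep' (i + 1) hi with h | h <;> rcases hstep' i (by omega) with h' | h' <;> omega
  refine ⟨p 1 - p 0, hstep' 0 hL, fun i hi => ?_⟩
  induction i with
  | zero => simp
  | succ i ih =>
    have := hconst i hi
    push_cast
    linear_combination ih (by omega) + this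

namespace TPath

variable {V : Type*} {lab : V → V → Finset ℕ}

def single (v : V) : TPath lab where
  len := 0
  verts _ := v
  times := Fin.elim0
  inj a b _ := Fin.ext (by omega)
  mono := fun a => a.elim0
  mem_lab := fun a => a.elim0

def segment (P : TPath lab) (i L : ℕ) (h : i + L ≤ P.len) : TPath lab where
  len := L
  verts k := P.verts ⟨i + k, by omega⟩
  times k := P.times ⟨i + k, by omega⟩
  inj _ _ hkl := Fin.ext (by have := congrArg Fin.val (P.inj hkl); simp only at this; omega)
  mono _ _ hkl := P.mono (Fin.mk_lt_mk.mpr (Nat.add_lt_add_left hkl i))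
  mem_lab k := P.mem_lab ⟨i + k, by omega⟩

theorem adj_verts (P : TPath lab) (k : Fin P.len) :
    (underlyingGraph lab).Adj (P.verts k.castSucc) (P.verts k.succ) :=
  ⟨P.inj.ne Fin.castSucc_lt_succ.ne, Or.inl ⟨_, P.mem_lab k⟩⟩

end TPath

namespace TempConnected

variable {V : Type*} {lab : V → V → Finset ℕ}

theorem refl (v : V) : TempConnected lab v v :=
  ⟨TPath.single v, ⟨0, rfl⟩, ⟨0, rfl⟩⟩

theorem symm {u v : V} (h : TempConnected lab u v) : TempConnected lab v u :=
  h.imp fun _ hP => hP.symm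

end TempConnected

section Line

variable {V : Type*} {lab : V → V → Finset ℕ} {n : ℕ}
  (e : underlyingGraph lab ↪g SimpleGraph.pathGraph n)

theorem TPath.exists_pos_eq_add_mul (P : TPath lab) :
    ∃ d : ℤ, (d = 1 ∨ d = -1) ∧
      ∀ i : Fin (P.len + 1),
        ((e (P.verts i) : ℕ) : ℤ) = (e (P.verts 0) : ℕ) + d * (i : ℕ) := by
  let p : ℕ → ℤ := fun i => (e (P.verts (Fin.clamp i P.len)) : ℕ)
  have hclamp : ∀ i : Fin (P.len + 1), Fin.clamp i P.len = i := fun i =>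
    Fin.ext (Nat.min_eq_left (Nat.lt_succ_iff.mp i.isLt))
  have hp : ∀ i : Fin (P.len + 1), p i = (e (P.verts i) : ℕ) := fun i => by simp [p, hclamp]
  have hinj : Set.InjOn p (Set.Iic P.len) := fun i hi j hj h => by
    simp only [p, Nat.cast_inj, Fin.val_inj] at h
    have := congrArg Fin.val (P.inj (e.injective h))
    simp only [Fin.clamp, Set.mem_Iic] at this hi hj
    omega
  have hstep : ∀ i < P.len, |p (i + 1) - p i| = 1 := fun i hi => by
    have := e.map_adj_iff.mpr (P.adj_verts ⟨i, hi⟩)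
    rw [SimpleGraph.pathGraph_adj] at this
    have h1 := hp (Fin.castSucc ⟨i, hi⟩)
    have h2 := hp (Fin.succ ⟨i, hi⟩)
    simp only [Fin.val_castSucc, Fin.val_succ] at h1 h2
    rw [abs_eq zero_le_one, h1, h2]
    omega
  obtain ⟨d, hd, hd'⟩ := exists_eq_add_mul_of_injOn_of_abs_sub_eq_one hinj hstep
  refine ⟨d, hd, fun i => ?_⟩
  have h0 := hp 0
  rw [Fin.val_zero] at h0
  rw [← hp, ← h0]
  exact hd' i (Nat.lt_succ_iff.mp i.isLt)

theorem TempConnected.exists_tpath_image_eq_uIcc {u v : V} (h : TempConnected lab u v) :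
    ∃ Q : TPath lab, (fun w => (e w : ℕ)) '' Q.vertexSet = Set.uIcc (e u : ℕ) (e v) := by
  obtain ⟨P, ⟨⟨i, hi⟩, rfl⟩, ⟨⟨j, hj⟩, rfl⟩⟩ := h
  wlog hij : i ≤ j generalizing i j
  · rw [Set.uIcc_comm]
    exact this j hj i hi (le_of_not_ge hij)
  obtain ⟨d, hd, hpos⟩ := P.exists_pos_eq_add_mul e
  have hposi := hpos ⟨i, hi⟩
  have hposj := hpos ⟨j, hj⟩
  refine ⟨P.segment i (j - i) (by omega), Set.ext fun c => ?_⟩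
  simp only [TPath.vertexSet, TPath.segment, Set.mem_image, Set.exists_range_iff,
    Set.mem_uIcc]
  constructor
  · rintro ⟨k, rfl⟩
    have hk := hpos ⟨i + k, by omega⟩
    rcases hd with rfl | rfl <;> simp only at hk hposi hposj <;> omega
  · intro hc
    obtain ⟨k, hk, hck⟩ :
        ∃ k ≤ j - i, (c : ℤ) = (e (P.verts 0) : ℕ) + d * (i + k : ℕ) := by
      rcases hd with rfl | rfl <;> simp only at hposi hposj
      · exact ⟨c - (e (P.verts ⟨i, hi⟩) : ℕ), by omega, by omega⟩
      · exact ⟨(e (P.verts ⟨i, hi⟩) : ℕ) - c, by omega, by omega⟩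
    refine ⟨⟨k, by omega⟩, ?_⟩
    have := hpos ⟨i + k, by omega⟩
    simp only at this ⊢
    omega

def IsTemporalInterval (a b : ℕ) : Prop :=
  ∃ P : TPath lab, (fun v => (e v : ℕ)) '' P.vertexSet = Set.Icc a b

theorem isTemporalInterval_self (v : V) : IsTemporalInterval e (e v) (e v) :=
  ⟨TPath.single v, by simp [TPath.vertexSet, TPath.single]⟩

variable {e} in
theorem IsTemporalInterval.lt {a b : ℕ} (h : IsTemporalInterval e a b) : b < n := by
  obtain ⟨P, hP⟩ := h
  obtain ⟨v, -, hv⟩ := hP.symm.subset (Set.right_mem_Icc.mpr (by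
    have := hP.subset (Set.mem_image_of_mem _ (Set.mem_range_self (f := P.verts) 0))
    exact this.1.trans this.2))
  exact hv ▸ (e v).isLt

theorem TempConnected.isTemporalInterval {u v : V} (h : TempConnected lab u v)
    (huv : (e u : ℕ) ≤ e v) : IsTemporalInterval e (e u) (e v) := by
  obtain ⟨Q, hQ⟩ := h.exists_tpath_image_eq_uIcc e
  exact ⟨Q, hQ.trans (Set.uIcc_of_le huv)⟩

variable {e} in
theorem IsTemporalInterval.mono_right {a b c : ℕ} (h : IsTemporalInterval e a b) (hac : a ≤ c)
    (hcb : c ≤ b) : IsTemporalInterval e a c := by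
  obtain ⟨P, hP⟩ := h
  obtain ⟨u, hu, rfl⟩ := hP.symm.subset (Set.mem_Icc.mpr ⟨le_rfl, hac.trans hcb⟩)
  obtain ⟨w, hw, rfl⟩ := hP.symm.subset (Set.mem_Icc.mpr ⟨hac, hcb⟩)
  exact TempConnected.isTemporalInterval e ⟨P, hu, hw⟩ hac

theorem not_tempConnected_of_forall_isTemporalInterval_le {a b : ℕ}
    (hmax : ∀ c, IsTemporalInterval e a c → c ≤ b) {u w : V} (hu : (e u : ℕ) = a)
    (hw : b < e w) : ¬ TempConnected lab u w := fun h => by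
  have hab := hmax a (hu ▸ isTemporalInterval_self e u)
  have hint : IsTemporalInterval e a (e w) := hu ▸ h.isTemporalInterval e (by omega)
  exact absurd (hmax _ (hint.mono_right (by omega) hw)) (by omega)

end Line

theorem exists_disjoint_cover_antichain_ge {V : Type*} {lab : V → V → Finset ℕ} {n : ℕ}
    (e : underlyingGraph lab ≃g SimpleGraph.pathGraph n) (a : ℕ) :
    ∃ (k : ℕ) (C : Fin k → TPath lab) (s : Fin k → V),
      (∀ v, a ≤ (e v : ℕ) ↔ ∃ i, v ∈ (C i).vertexSet) ∧
      Pairwise (Disjoint on fun i => (C i).vertexSet) ∧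
      (∀ i, a ≤ (e (s i) : ℕ)) ∧
      Pairwise fun i j => ¬ TempConnected lab (s i) (s j) := by
  classical
  by_cases hna : n ≤ a
  · refine ⟨0, Fin.elim0, Fin.elim0, fun v => ?_, fun i => i.elim0, fun i => i.elim0,
      fun i => i.elim0⟩
    simpa using (e v).isLt.trans_le hna
  push Not at hna
  obtain ⟨u, hu⟩ : ∃ u, (e u : ℕ) = a := ⟨e.symm ⟨a, hna⟩, by simp⟩
  set b := Nat.findGreatest (IsTemporalInterval e.toEmbedding a) n
  have hmax : ∀ c, IsTemporalInterval e.toEmbedding a c → c ≤ b :=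
    fun c hc => Nat.le_findGreatest hc.lt.le hc
  have hself : IsTemporalInterval e.toEmbedding a a :=
    hu ▸ isTemporalInterval_self e.toEmbedding u
  have hab : a ≤ b := Nat.le_findGreatest hna.le hself
  obtain ⟨P, hP⟩ : IsTemporalInterval e.toEmbedding a b := Nat.findGreatest_spec hna.le hself
  have hmemP : ∀ v, v ∈ P.vertexSet ↔ a ≤ (e v : ℕ) ∧ (e v : ℕ) ≤ b := fun v => by
    rw [← Set.mem_Icc, ← hP]
    exact ((Fin.val_injective.comp e.injective).mem_set_image).symm
  obtain ⟨k, C, s, hC, hdisj, hs, hanti⟩ := exists_disjoint_cover_antichain_ge e (b + 1)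
  have hmemC : ∀ j, ∀ v ∈ (C j).vertexSet, b + 1 ≤ (e v : ℕ) :=
    fun j v hv => (hC v).mpr ⟨j, hv⟩
  have hfar : ∀ j, ¬ TempConnected lab u (s j) := fun j =>
    not_tempConnected_of_forall_isTemporalInterval_le e.toEmbedding hmax hu (hs j)
  refine ⟨k + 1, Fin.cons P C, Fin.cons u s, fun v => ?_, ?_, ?_, ?_⟩
  · rw [Fin.exists_fin_succ]
    simp only [Fin.cons_zero, Fin.cons_succ, hmemP, ← hC]
    omega
  · refine pairwise_fin_succ_iff.mpr ⟨fun i => ?_, fun j => ?_, fun i j hij => hdisj hij⟩ <;>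
      simp only [onFun, Fin.cons_zero, Fin.cons_succ, Set.disjoint_left]
    · exact fun v hv hvP => absurd (hmemC i v hv) (by have := (hmemP v).mp hvP; omega)
    · exact fun v hvP hv => absurd (hmemC j v hv) (by have := (hmemP v).mp hvP; omega)
  · exact Fin.cases hu.ge fun i => by simp only [Fin.cons_succ]; have := hs i; omega
  · exact pairwise_fin_succ_iff.mpr
      ⟨fun i h => hfar i h.symm, hfar, fun i j hij => hanti hij⟩
termination_by n - a

section Dilworth

variable {V : Type*} {lab : V → V → Finset ℕ}

theorem IsTempAntichain.card_le_of_isTPC {S : Finset V} (hS : IsTempAntichain lab S) {m : ℕ}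
    {C : Fin m → TPath lab} (hC : IsTPC lab C) : S.card ≤ m := by
  choose φ hφ using hC
  simpa using Finset.card_le_card_of_injOn φ
    (fun _ _ => Finset.mem_coe.mpr (Finset.mem_univ _)) fun s hs t ht hst =>
      by_contra fun hne => hS hs ht hne ⟨C (φ s), hφ s, hst ▸ hφ t⟩

theorem tDisjoint_of_disjoint {P Q : TPath lab} (h : Disjoint P.vertexSet Q.vertexSet) :
    TDisjoint P Q := by
  intro i j hshare
  exfalso
  rcases hshare with h' | h' | h' | h' <;>
    exact Set.disjoint_left.mp h (Set.mem_range_self _) ⟨_, h'.symm⟩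

theorem dilworth_of_disjoint_cover_of_antichain {k : ℕ} (C : Fin k → TPath lab)
    (hC : IsTPC lab C) (hdisj : Pairwise (Disjoint on fun i => (C i).vertexSet)) (s : Fin k → V)
    (hs : Pairwise fun i j => ¬ TempConnected lab (s i) (s j)) :
    IsLeast (tdpcSizes lab) k ∧ IsLeast (tpcSizes lab) k ∧
      IsGreatest (antichainSizes lab) k := by
  classical
  have hinj : Injective s := fun i j hij =>
    by_contra fun hne => hs hne (hij ▸ TempConnected.refl (s i))
  have hanti : IsTempAntichain lab ↑(Finset.univ.image s) := by
    rintro _ hu _ hv hne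
    simp only [Finset.coe_image, Finset.coe_univ, Set.image_univ, Set.mem_range] at hu hv
    obtain ⟨i, rfl⟩ := hu
    obtain ⟨j, rfl⟩ := hv
    exact hs (ne_of_apply_ne s hne)
  have hcard : (Finset.univ.image s).card = k := by
    rw [Finset.card_image_of_injective _ hinj, Finset.card_univ, Fintype.card_fin]
  refine ⟨⟨⟨C, hC, fun i j hij => tDisjoint_of_disjoint (hdisj hij)⟩, ?_⟩, ⟨⟨C, hC⟩, ?_⟩,
    ⟨⟨_, hcard, hanti⟩, ?_⟩⟩
  · rintro m ⟨C', hC', -⟩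
    exact hcard ▸ hanti.card_le_of_isTPC hC'
  · rintro m ⟨C', hC'⟩
    exact hcard ▸ hanti.card_le_of_isTPC hC'
  · rintro m ⟨S, rfl, hS⟩
    exact hS.card_le_of_isTPC hC

end Dilworth

theorem oriented_line_dilworth_general {V : Type*} [Fintype V] (lab : V → V → Finset ℕ)
    (hline : Nonempty (underlyingGraph lab ≃g SimpleGraph.pathGraph (Fintype.card V))) :
    ∃ k : ℕ, IsLeast (tdpcSizes lab) k ∧ IsLeast (tpcSizes lab) k ∧
      IsGreatest (antichainSizes lab) k := by
  obtain ⟨e⟩ := hline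
  obtain ⟨k, C, s, hC, hdisj, -, hs⟩ := exists_disjoint_cover_antichain_ge e 0
  exact ⟨k, dilworth_of_disjoint_cover_of_antichain C (fun v => (hC v).mp (Nat.zero_le _))
    hdisj s hs⟩

/-- Temporal oriented lines satisfy the Dilworth and TD-Dilworth properties: the minimum
sizes of a temporally disjoint path cover and of a temporal path cover, and the maximum
size of a temporal antichain, all coincide. -/
theorem oriented_line_dilworth {V : Type*} [Fintype V] (lab : V → V → Finset ℕ)
    (hpos : PositiveLabels lab)
    (horient : ∀ u v : V, (lab u v).Nonempty → lab v u = ∅)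
    (hline : Nonempty (underlyingGraph lab ≃g SimpleGraph.pathGraph (Fintype.card V))) :
    ∃ k : ℕ, IsLeast (tdpcSizes lab) k ∧ IsLeast (tpcSizes lab) k ∧
      IsGreatest (antichainSizes lab) k :=
  oriented_line_dilworth_general lab hline
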